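/- Let N ≥ 2 and let K satisfy the kernel condition. There exists a constant C, depending only on N and C₀, such that for every finite positive Radon measure μ on ℝ^N and all points x, y ∈ ℝ^N with r := |x−y| > 0, if ν denotes the restriction of μ to the complement of the ball B(x,2r), then |∫ (K(y−w) − K(x−w)) dν(w)| ≤ C · |x−y| · (M(μ)(x) + T*(μ)(x)). -/

import Mathlib

open MeasureTheory Metric Filter
open scoped ENNReal Topology NNReal

/-- The kernel condition: `K` is twice continuously differentiable off the origin
and `|∇^j K(x)| ≤ C₀ |x|^{-(N-1+j)}` for `j = 0, 1, 2` and all `x ≠ 0`. -/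
def KernelCond (N : ℕ) (C₀ : ℝ) (K : EuclideanSpace ℝ (Fin N) → ℝ) : Prop :=
  ContDiffOn ℝ 2 K {(0 : EuclideanSpace ℝ (Fin N))}ᶜ ∧
    ∀ j : ℕ, j ≤ 2 → ∀ x : EuclideanSpace ℝ (Fin N), x ≠ 0 →
      ‖iteratedFDeriv ℝ j K x‖ ≤ C₀ * ‖x‖ ^ (-(N - 1 + j : ℝ))

/-- The Hardy–Littlewood maximal function of a (positive) measure:
`M(μ)(x) = sup_{r>0} μ(B(x,r)) / |B(x,r)|`. -/
noncomputable def maxFn {N : ℕ} (μ : Measure (EuclideanSpace ℝ (Fin N)))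
    (x : EuclideanSpace ℝ (Fin N)) : ℝ≥0∞ :=
  ⨆ (r : ℝ) (_ : 0 < r), μ (ball x r) / volume (ball x r)

/-- The maximal singular integral `T*(μ)(x) = sup_{ε>0} |∫_{|x-y|>ε} ∇K(x-y) dμ(y)|`
associated with the gradient kernel `∇K`, for a positive measure `μ`. -/
noncomputable def maxSing {N : ℕ} (K : EuclideanSpace ℝ (Fin N) → ℝ)
    (μ : Measure (EuclideanSpace ℝ (Fin N))) (x : EuclideanSpace ℝ (Fin N)) : ℝ≥0∞ :=
  ⨆ (ε : ℝ) (_ : 0 < ε),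
    ENNReal.ofReal ‖∫ y in {y | ε < ‖x - y‖}, gradient K (x - y) ∂μ‖

/-! Expand `K (y - w) - K (x - w)` to first order at `x - w`. Since `|x - w| ≥ 2r`, Taylor's
formula leaves a remainder `O(r² |x - w|^{-(N+1)})`; splitting the region into dyadic annuli
`2^k·2r ≤ |x - w| < 2^{k+1}·2r` and bounding the mass of each by `Mμ(x)` times its volume gives
`O(r Mμ(x))` for the integrated remainder. The linear term is `⟪∫ ∇K(x - w) dμ(w), y - x⟫`, a
truncated singular integral over `|x - w| ≥ 2r`, which is the limit of the truncations at `ε ↑ 2r`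
and hence at most `T*μ(x)` in norm. -/

open Set

theorem Convex.norm_sub_sub_fderiv_le_of_norm_fderiv_fderiv_le
    {E F : Type*} [NormedAddCommGroup E] [NormedSpace ℝ E]
    [NormedAddCommGroup F] [NormedSpace ℝ F] {f : E → F} {s : Set E} {B : ℝ}
    (hs : Convex ℝ s) (hf : ∀ z ∈ s, DifferentiableAt ℝ f z)
    (hf' : ∀ z ∈ s, DifferentiableAt ℝ (fderiv ℝ f) z)
    (hB : ∀ z ∈ s, ‖fderiv ℝ (fderiv ℝ f) z‖ ≤ B) {a b : E} (ha : a ∈ s) (hb : b ∈ s) :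
    ‖f b - f a - fderiv ℝ f a (b - a)‖ ≤ B * ‖b - a‖ ^ 2 := by
  have hseg : segment ℝ a b ⊆ s := hs.segment_subset ha hb
  have hlip : ∀ z ∈ segment ℝ a b, ‖fderiv ℝ f z - fderiv ℝ f a‖ ≤ B * ‖b - a‖ := fun z hz =>
    calc ‖fderiv ℝ f z - fderiv ℝ f a‖ ≤ B * ‖z - a‖ :=
          hs.norm_image_sub_le_of_norm_fderiv_le hf' hB ha (hseg hz)
      _ ≤ B * ‖b - a‖ :=
          mul_le_mul_of_nonneg_left (norm_sub_le_of_mem_segment hz)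
            ((norm_nonneg (fderiv ℝ (fderiv ℝ f) a)).trans (hB a ha))
  calc ‖f b - f a - fderiv ℝ f a (b - a)‖ ≤ B * ‖b - a‖ * ‖b - a‖ :=
        (convex_segment a b).norm_image_sub_le_of_norm_fderiv_le'
          (fun z hz => hf z (hseg hz)) hlip (left_mem_segment ℝ a b) (right_mem_segment ℝ a b)
    _ = B * ‖b - a‖ ^ 2 := by ring

theorem tendsto_setIntegral_setOf_lt_nhdsLT {α G : Type*} [MeasurableSpace α]
    [NormedAddCommGroup G] [NormedSpace ℝ G] {μ : Measure α} {φ : α → ℝ} (hφ : Measurable φ)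
    {f : α → G} (hfm : AEStronglyMeasurable f μ) {a ρ : ℝ} (ha : a < ρ)
    (hf : IntegrableOn f {w | a < φ w} μ) :
    Tendsto (fun ε => ∫ w in {w | ε < φ w}, f w ∂μ) (𝓝[<] ρ)
      (𝓝 (∫ w in {w | ρ ≤ φ w}, f w ∂μ)) := by
  have hmeas : ∀ c : ℝ, MeasurableSet {w | c < φ w} := fun c =>
    measurableSet_lt measurable_const hφ
  simp_rw [← integral_indicator (hmeas _),
    ← integral_indicator (measurableSet_le measurable_const hφ)]
  refine tendsto_integral_filter_of_dominated_convergence _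
    (Eventually.of_forall fun ε => hfm.indicator (hmeas ε)) ?_
    (hf.integrable_indicator (hmeas a)).norm (ae_of_all _ fun w => ?_)
  · filter_upwards [Ioo_mem_nhdsLT ha] with ε hε
    exact ae_of_all _ fun w => norm_indicator_le_of_subset
      (fun w hw => lt_trans hε.1 hw) f w
  · rcases le_or_gt ρ (φ w) with hw | hw
    · rw [indicator_of_mem (show w ∈ {w | ρ ≤ φ w} from hw)]
      refine tendsto_const_nhds.congr' ?_
      filter_upwards [self_mem_nhdsWithin] with ε hε
      exact (indicator_of_mem (show w ∈ {w | ε < φ w} from lt_of_lt_of_le hε hw) f).symm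
    · rw [indicator_of_notMem (show w ∉ {w | ρ ≤ φ w} from not_le.2 hw)]
      refine tendsto_const_nhds.congr' ?_
      filter_upwards [Ioo_mem_nhdsLT hw] with ε hε
      exact (indicator_of_notMem (show w ∉ {w | ε < φ w} from not_lt.2 hε.1.le) f).symm

theorem compl_ball_eq_setOf_le_norm_sub {E : Type*} [SeminormedAddCommGroup E] (x : E) (ρ : ℝ) :
    (ball x ρ)ᶜ = {w | ρ ≤ ‖x - w‖} := by
  ext w
  simp [dist_eq_norm']

theorem norm_integral_gradient_eq {α F : Type*} [MeasurableSpace α] [NormedAddCommGroup F]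
    [InnerProductSpace ℝ F] [CompleteSpace F] (f : F → ℝ) (g : α → F) (μ : Measure α) :
    ‖∫ a, gradient f (g a) ∂μ‖ = ‖∫ a, fderiv ℝ f (g a) ∂μ‖ := by
  rw [← LinearIsometryEquiv.norm_map (InnerProductSpace.toDual ℝ F).symm]
  exact congrArg norm
    ((InnerProductSpace.toDual ℝ F).symm.toContinuousLinearEquiv.integral_comp_comm _)

section MaximalFunction

variable {N : ℕ}

theorem measure_ball_le_maxFn (μ : Measure (EuclideanSpace ℝ (Fin N)))
    (x : EuclideanSpace ℝ (Fin N)) {ρ : ℝ} (hρ : 0 < ρ) :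
    μ (ball x ρ) ≤
      ENNReal.ofReal (ρ ^ N) * volume (ball (0 : EuclideanSpace ℝ (Fin N)) 1) * maxFn μ x := by
  have hvol : volume (ball x ρ) =
      ENNReal.ofReal (ρ ^ N) * volume (ball (0 : EuclideanSpace ℝ (Fin N)) 1) := by
    rw [Measure.addHaar_ball_of_pos volume x hρ, finrank_euclideanSpace_fin]
  rw [← hvol, mul_comm]
  exact (ENNReal.div_le_iff (measure_ball_pos volume x hρ).ne' measure_ball_lt_top.ne).1 <|
    le_iSup₂ (f := fun r (_ : 0 < r) => μ (ball x r) / volume (ball x r)) ρ hρ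

theorem lintegral_compl_ball_inv_pow_le_maxFn (μ : Measure (EuclideanSpace ℝ (Fin N)))
    (x : EuclideanSpace ℝ (Fin N)) {R : ℝ} (hR : 0 < R) :
    ∫⁻ w in (ball x R)ᶜ, ENNReal.ofReal (‖x - w‖ ^ (N + 1))⁻¹ ∂μ ≤
      ENNReal.ofReal (2 ^ (N + 1) / R) * volume (ball (0 : EuclideanSpace ℝ (Fin N)) 1) *
        maxFn μ x := by
  set V := volume (ball (0 : EuclideanSpace ℝ (Fin N)) 1)
  set A : ℕ → Set (EuclideanSpace ℝ (Fin N)) :=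
    fun k => ball x (2 ^ (k + 1) * R) \ ball x (2 ^ k * R)
  have hcover : (ball x R)ᶜ ⊆ ⋃ k, A k := fun w hw => by
    rw [compl_ball_eq_setOf_le_norm_sub] at hw
    obtain ⟨k, hk, hk'⟩ := exists_nat_pow_near ((one_le_div hR).2 hw) one_lt_two
    refine mem_iUnion.2 ⟨k, ?_, ?_⟩
    · rw [mem_ball', dist_eq_norm]
      exact (div_lt_iff₀ hR).1 hk'
    · rw [mem_ball', dist_eq_norm, not_lt]
      exact (le_div_iff₀ hR).1 hk
  have hterm : ∀ k, ∫⁻ w in A k, ENNReal.ofReal (‖x - w‖ ^ (N + 1))⁻¹ ∂μ ≤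
      ENNReal.ofReal (2 ^ N / R * 2⁻¹ ^ k) * (V * maxFn μ x) := fun k => by
    calc _ ≤ ∫⁻ _ in A k, ENNReal.ofReal ((2 ^ k * R) ^ (N + 1))⁻¹ ∂μ :=
          setLIntegral_mono' (measurableSet_ball.diff measurableSet_ball) fun w hw => by
            have hw' : 2 ^ k * R ≤ ‖x - w‖ := by
              simpa [dist_eq_norm'] using hw.2
            gcongr
      _ = ENNReal.ofReal ((2 ^ k * R) ^ (N + 1))⁻¹ * μ (A k) := setLIntegral_const _ _
      _ ≤ ENNReal.ofReal ((2 ^ k * R) ^ (N + 1))⁻¹ *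
            (ENNReal.ofReal ((2 ^ (k + 1) * R) ^ N) * V * maxFn μ x) := by
          gcongr
          exact (measure_mono sdiff_subset).trans (measure_ball_le_maxFn μ x (by positivity))
      _ = ENNReal.ofReal (2 ^ N / R * 2⁻¹ ^ k) * (V * maxFn μ x) := by
          rw [mul_assoc _ V, ← mul_assoc, ← ENNReal.ofReal_mul (by positivity)]
          congr 2
          simp only [inv_pow]
          field_simp
          ring
  have hsummable : Summable fun k : ℕ => 2 ^ N / R * (2⁻¹ : ℝ) ^ k :=
    (summable_geometric_of_lt_one (by norm_num) (by norm_num)).mul_left _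
  have htsum : ∑' k : ℕ, 2 ^ N / R * (2⁻¹ : ℝ) ^ k = 2 ^ (N + 1) / R := by
    rw [tsum_mul_left, tsum_geometric_inv_two]
    ring
  calc _ ≤ ∫⁻ w in ⋃ k, A k, ENNReal.ofReal (‖x - w‖ ^ (N + 1))⁻¹ ∂μ :=
        lintegral_mono_set hcover
    _ ≤ ∑' k, ∫⁻ w in A k, ENNReal.ofReal (‖x - w‖ ^ (N + 1))⁻¹ ∂μ := lintegral_iUnion_le _ _
    _ ≤ ∑' k, ENNReal.ofReal (2 ^ N / R * 2⁻¹ ^ k) * (V * maxFn μ x) :=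
        ENNReal.tsum_le_tsum hterm
    _ = ENNReal.ofReal (2 ^ (N + 1) / R) * V * maxFn μ x := by
        rw [ENNReal.tsum_mul_right, ← ENNReal.ofReal_tsum_of_nonneg (fun k => by positivity)
          hsummable, htsum, mul_assoc]

end MaximalFunction

namespace KernelCond

variable {N : ℕ} {C₀ : ℝ} {K : EuclideanSpace ℝ (Fin N) → ℝ}

theorem const_nonneg_of_ne_zero (hK : KernelCond N C₀ K) {z : EuclideanSpace ℝ (Fin N)}
    (hz : z ≠ 0) : 0 ≤ C₀ :=
  nonneg_of_mul_nonneg_left ((norm_nonneg _).trans (hK.2 0 (by norm_num) z hz))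
    (Real.rpow_pos_of_pos (norm_pos_iff.2 hz) _)

theorem const_nonneg (hN : 0 < N) (hK : KernelCond N C₀ K) : 0 ≤ C₀ :=
  have : Nontrivial (EuclideanSpace ℝ (Fin N)) :=
    Module.nontrivial_of_finrank_pos (R := ℝ) (by rwa [finrank_euclideanSpace_fin])
  hK.const_nonneg_of_ne_zero (exists_ne 0).choose_spec

theorem contDiffAt (hK : KernelCond N C₀ K) {z : EuclideanSpace ℝ (Fin N)} (hz : z ≠ 0) :
    ContDiffAt ℝ 2 K z :=
  hK.1.contDiffAt (isOpen_compl_singleton.mem_nhds hz)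

theorem differentiableAt (hK : KernelCond N C₀ K) {z : EuclideanSpace ℝ (Fin N)} (hz : z ≠ 0) :
    DifferentiableAt ℝ K z :=
  (hK.contDiffAt hz).differentiableAt (by norm_num)

theorem differentiableAt_fderiv (hK : KernelCond N C₀ K) {z : EuclideanSpace ℝ (Fin N)}
    (hz : z ≠ 0) : DifferentiableAt ℝ (fderiv ℝ K) z :=
  ((hK.contDiffAt hz).fderiv_right (m := 1) (by norm_num)).differentiableAt (by norm_num)

theorem measurable (hK : KernelCond N C₀ K) : Measurable K := by
  classical
  simpa using (continuousOn_singleton K 0).measurable_piecewise hK.1.continuousOn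
    (measurableSet_singleton 0)

theorem norm_iteratedFDeriv_le_of_le_norm (hK : KernelCond N C₀ K) {j : ℕ} (hj : j ≤ 2)
    (hNj : 1 ≤ N + j) {r : ℝ} (hr : 0 < r) {z : EuclideanSpace ℝ (Fin N)} (hrz : r ≤ ‖z‖) :
    ‖iteratedFDeriv ℝ j K z‖ ≤ C₀ * r ^ (-(N - 1 + j : ℝ)) := by
  have hz : z ≠ 0 := norm_pos_iff.1 (hr.trans_le hrz)
  have hexp : 0 ≤ (N - 1 + j : ℝ) := by
    have : (1 : ℝ) ≤ N + j := by exact_mod_cast hNj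
    linarith
  exact (hK.2 j hj z hz).trans <| mul_le_mul_of_nonneg_left
    (Real.rpow_le_rpow_of_nonpos hr hrz (neg_nonpos.2 hexp)) (hK.const_nonneg_of_ne_zero hz)

theorem norm_sub_sub_fderiv_le (hK : KernelCond N C₀ K) {a b : EuclideanSpace ℝ (Fin N)}
    (ha : a ≠ 0) (hab : 2 * ‖b - a‖ ≤ ‖a‖) :
    ‖K b - K a - fderiv ℝ K a (b - a)‖ ≤ C₀ * 2 ^ (N + 1) * ‖b - a‖ ^ 2 * (‖a‖ ^ (N + 1))⁻¹ := by
  have ha' : 0 < ‖a‖ := norm_pos_iff.2 ha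
  have hfar : ∀ z ∈ closedBall a (‖a‖ / 2), ‖a‖ / 2 ≤ ‖z‖ := fun z hz => by
    rw [mem_closedBall, dist_eq_norm] at hz
    linarith [norm_sub_norm_le a z, norm_sub_rev a z]
  have hz0 : ∀ z ∈ closedBall a (‖a‖ / 2), z ≠ 0 := fun z hz =>
    norm_pos_iff.1 ((half_pos ha').trans_le (hfar z hz))
  have hB : ∀ z ∈ closedBall a (‖a‖ / 2),
      ‖fderiv ℝ (fderiv ℝ K) z‖ ≤ C₀ * 2 ^ (N + 1) * (‖a‖ ^ (N + 1))⁻¹ := fun z hz => by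
    have hnorm : ‖fderiv ℝ (fderiv ℝ K) z‖ = ‖iteratedFDeriv ℝ 2 K z‖ := by
      rw [← norm_iteratedFDeriv_fderiv (n := 1), ← norm_iteratedFDeriv_fderiv (n := 0),
        norm_iteratedFDeriv_zero]
    refine hnorm.trans_le <| (hK.norm_iteratedFDeriv_le_of_le_norm le_rfl (by omega)
      (half_pos ha') (hfar z hz)).trans_eq ?_
    rw [show -((N : ℝ) - 1 + (2 : ℕ)) = -((N + 1 : ℕ) : ℝ) by push_cast; ring,
      Real.rpow_neg (by positivity), Real.rpow_natCast, div_pow, inv_div]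
    ring
  have hb : b ∈ closedBall a (‖a‖ / 2) := by
    rw [mem_closedBall, dist_eq_norm]; linarith
  refine ((convex_closedBall a _).norm_sub_sub_fderiv_le_of_norm_fderiv_fderiv_le
    (fun z hz => hK.differentiableAt (hz0 z hz))
    (fun z hz => hK.differentiableAt_fderiv (hz0 z hz)) hB
    (mem_closedBall_self (by positivity)) hb).trans_eq ?_
  ring

variable {μ : Measure (EuclideanSpace ℝ (Fin N))}

theorem integrableOn_comp_sub (hN : 0 < N) (hK : KernelCond N C₀ K) [IsFiniteMeasure μ]
    {s : Set (EuclideanSpace ℝ (Fin N))} (hs : MeasurableSet s) {x₀ : EuclideanSpace ℝ (Fin N)}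
    {r : ℝ} (hr : 0 < r) (hsr : ∀ w ∈ s, r ≤ ‖x₀ - w‖) :
    IntegrableOn (fun w => K (x₀ - w)) s μ :=
  Measure.integrableOn_of_bounded (M := C₀ * r ^ (-(N - 1 + (0 : ℕ) : ℝ))) (measure_ne_top μ s)
    (hK.measurable.comp (measurable_const.sub measurable_id)).aestronglyMeasurable
    ((ae_restrict_iff' hs).2 <| ae_of_all _ fun w hw => by
      simpa only [norm_iteratedFDeriv_zero] using
        hK.norm_iteratedFDeriv_le_of_le_norm (j := 0) (by norm_num) hN hr (hsr w hw))

theorem integrableOn_fderiv_comp_sub (hK : KernelCond N C₀ K) [IsFiniteMeasure μ]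
    {s : Set (EuclideanSpace ℝ (Fin N))} (hs : MeasurableSet s) {x₀ : EuclideanSpace ℝ (Fin N)}
    {r : ℝ} (hr : 0 < r) (hsr : ∀ w ∈ s, r ≤ ‖x₀ - w‖) :
    IntegrableOn (fun w => fderiv ℝ K (x₀ - w)) s μ :=
  Measure.integrableOn_of_bounded (M := C₀ * r ^ (-(N - 1 + (1 : ℕ) : ℝ))) (measure_ne_top μ s)
    ((measurable_fderiv ℝ K).comp (measurable_const.sub measurable_id)).aestronglyMeasurable
    ((ae_restrict_iff' hs).2 <| ae_of_all _ fun w hw => by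
      simpa only [norm_iteratedFDeriv_one] using
        hK.norm_iteratedFDeriv_le_of_le_norm (j := 1) (by norm_num) (by omega) hr (hsr w hw))

theorem ofReal_norm_setIntegral_compl_ball_fderiv_le_maxSing (hK : KernelCond N C₀ K)
    [IsFiniteMeasure μ] (x : EuclideanSpace ℝ (Fin N)) {ρ : ℝ} (hρ : 0 < ρ) :
    ENNReal.ofReal ‖∫ w in (ball x ρ)ᶜ, fderiv ℝ K (x - w) ∂μ‖ ≤ maxSing K μ x := by
  have hφ : Measurable fun w : EuclideanSpace ℝ (Fin N) => ‖x - w‖ :=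
    (measurable_const.sub measurable_id).norm
  have hlim := tendsto_setIntegral_setOf_lt_nhdsLT (μ := μ)
    (f := fun w => fderiv ℝ K (x - w)) hφ
    ((measurable_fderiv ℝ K).comp (measurable_const.sub measurable_id)).aestronglyMeasurable
    (half_lt_self hρ) (hK.integrableOn_fderiv_comp_sub (measurableSet_lt measurable_const hφ)
      (half_pos hρ) fun _ hw => le_of_lt hw)
  rw [compl_ball_eq_setOf_le_norm_sub]
  refine le_of_tendsto ((ENNReal.continuous_ofReal.tendsto _).comp hlim.norm) ?_
  filter_upwards [Ioo_mem_nhdsLT hρ] with ε hε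
  rw [Function.comp_apply, ← norm_integral_gradient_eq]
  exact le_iSup₂ (f := fun ε (_ : 0 < ε) =>
    ENNReal.ofReal ‖∫ y in {y | ε < ‖x - y‖}, gradient K (x - y) ∂μ‖) ε hε.1

theorem enorm_setIntegral_compl_ball_fderiv_apply_le (hK : KernelCond N C₀ K)
    [IsFiniteMeasure μ] (x v : EuclideanSpace ℝ (Fin N)) {ρ : ℝ} (hρ : 0 < ρ) :
    ‖∫ w in (ball x ρ)ᶜ, fderiv ℝ K (x - w) v ∂μ‖ₑ ≤ ENNReal.ofReal ‖v‖ * maxSing K μ x := by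
  have hint : IntegrableOn (fun w => fderiv ℝ K (x - w)) (ball x ρ)ᶜ μ :=
    hK.integrableOn_fderiv_comp_sub measurableSet_ball.compl hρ fun w hw => by
      rwa [compl_ball_eq_setOf_le_norm_sub] at hw
  rw [← ContinuousLinearMap.integral_apply hint, ofReal_norm, mul_comm]
  refine (ContinuousLinearMap.le_opENorm _ v).trans ?_
  gcongr
  rw [← ofReal_norm]
  exact hK.ofReal_norm_setIntegral_compl_ball_fderiv_le_maxSing x hρ

theorem enorm_setIntegral_compl_ball_sub_sub_fderiv_le (hN : 0 < N) (hK : KernelCond N C₀ K)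
    (x y : EuclideanSpace ℝ (Fin N)) {ρ : ℝ} (hρ : 0 < ρ) (hxy : 2 * ‖x - y‖ ≤ ρ) :
    ‖∫ w in (ball x ρ)ᶜ, (K (y - w) - K (x - w) - fderiv ℝ K (x - w) (y - x)) ∂μ‖ₑ ≤
      ENNReal.ofReal (C₀ * 2 ^ (2 * N + 1) * ‖x - y‖) *
        volume (ball (0 : EuclideanSpace ℝ (Fin N)) 1) * maxFn μ x := by
  have hC₀ := hK.const_nonneg hN
  have htaylor : ∀ w ∈ (ball x ρ)ᶜ,
      ‖K (y - w) - K (x - w) - fderiv ℝ K (x - w) (y - x)‖ₑ ≤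
        ENNReal.ofReal (C₀ * 2 ^ (N + 1) * ‖x - y‖ ^ 2) *
          ENNReal.ofReal (‖x - w‖ ^ (N + 1))⁻¹ := fun w hw => by
    have hw : ρ ≤ ‖x - w‖ := by rwa [compl_ball_eq_setOf_le_norm_sub] at hw
    have h := hK.norm_sub_sub_fderiv_le (a := x - w) (b := y - w)
      (norm_pos_iff.1 (hρ.trans_le hw)) (by rw [sub_sub_sub_cancel_right, norm_sub_rev]; linarith)
    rw [sub_sub_sub_cancel_right, norm_sub_rev y x] at h
    rw [← ENNReal.ofReal_mul (by positivity), ← ofReal_norm]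
    exact ENNReal.ofReal_le_ofReal h
  have hratio : ‖x - y‖ ^ 2 / ρ ≤ ‖x - y‖ / 2 := by
    rw [div_le_iff₀ hρ]
    nlinarith [norm_nonneg (x - y)]
  calc _ ≤ ∫⁻ w in (ball x ρ)ᶜ, ‖K (y - w) - K (x - w) - fderiv ℝ K (x - w) (y - x)‖ₑ ∂μ :=
        enorm_integral_le_lintegral_enorm _
    _ ≤ ∫⁻ w in (ball x ρ)ᶜ, ENNReal.ofReal (C₀ * 2 ^ (N + 1) * ‖x - y‖ ^ 2) *
          ENNReal.ofReal (‖x - w‖ ^ (N + 1))⁻¹ ∂μ :=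
        setLIntegral_mono' measurableSet_ball.compl htaylor
    _ = ENNReal.ofReal (C₀ * 2 ^ (N + 1) * ‖x - y‖ ^ 2) *
          ∫⁻ w in (ball x ρ)ᶜ, ENNReal.ofReal (‖x - w‖ ^ (N + 1))⁻¹ ∂μ :=
        lintegral_const_mul' _ _ ENNReal.ofReal_ne_top
    _ ≤ ENNReal.ofReal (C₀ * 2 ^ (N + 1) * ‖x - y‖ ^ 2) * (ENNReal.ofReal (2 ^ (N + 1) / ρ) *
          volume (ball (0 : EuclideanSpace ℝ (Fin N)) 1) * maxFn μ x) := by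
        gcongr
        exact lintegral_compl_ball_inv_pow_le_maxFn μ x hρ
    _ ≤ _ := by
        rw [← mul_assoc, ← mul_assoc, ← ENNReal.ofReal_mul (by positivity)]
        gcongr ENNReal.ofReal ?_ * _ * _
        calc C₀ * 2 ^ (N + 1) * ‖x - y‖ ^ 2 * (2 ^ (N + 1) / ρ)
            = C₀ * 2 ^ (2 * N + 2) * (‖x - y‖ ^ 2 / ρ) := by ring
          _ ≤ C₀ * 2 ^ (2 * N + 2) * (‖x - y‖ / 2) := by gcongr
          _ = C₀ * 2 ^ (2 * N + 1) * ‖x - y‖ := by ring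

theorem setIntegral_compl_ball_sub_eq (hN : 0 < N) (hK : KernelCond N C₀ K) [IsFiniteMeasure μ]
    (x y : EuclideanSpace ℝ (Fin N)) {ρ : ℝ} (hρ : 0 < ρ) (hxy : 2 * ‖x - y‖ ≤ ρ) :
    ∫ w in (ball x ρ)ᶜ, (K (y - w) - K (x - w)) ∂μ =
      ∫ w in (ball x ρ)ᶜ, (K (y - w) - K (x - w) - fderiv ℝ K (x - w) (y - x)) ∂μ +
        ∫ w in (ball x ρ)ᶜ, fderiv ℝ K (x - w) (y - x) ∂μ := by
  have hfar : ∀ w ∈ (ball x ρ)ᶜ, ρ ≤ ‖x - w‖ := fun w hw => by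
    rwa [compl_ball_eq_setOf_le_norm_sub] at hw
  have hfar' : ∀ w ∈ (ball x ρ)ᶜ, ρ / 2 ≤ ‖y - w‖ := fun w hw => by
    linarith [hfar w hw, norm_sub_le_norm_sub_add_norm_sub x y w]
  have hS : MeasurableSet (ball x ρ)ᶜ := measurableSet_ball.compl
  have hdiff : IntegrableOn (fun w => K (y - w) - K (x - w)) (ball x ρ)ᶜ μ :=
    (hK.integrableOn_comp_sub hN hS (half_pos hρ) hfar').sub
      (hK.integrableOn_comp_sub hN hS hρ hfar)
  have hlin : IntegrableOn (fun w => fderiv ℝ K (x - w) (y - x)) (ball x ρ)ᶜ μ :=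
    (hK.integrableOn_fderiv_comp_sub hS hρ hfar).apply_continuousLinearMap (y - x)
  rw [integral_sub hdiff hlin, sub_add_cancel]

end KernelCond

/-- For a kernel `K` satisfying the kernel condition there is `C = C(N, C₀)` such that
for every finite positive Radon measure `μ` and all `x ≠ y` (with `r = |x−y|`), the part
`ν` of `μ` living off the ball `B(x,2r)` satisfies
`|∫ (K(y−w) − K(x−w)) dν(w)| ≤ C |x−y| (M(μ)(x) + T*(μ)(x))`. -/
theorem far_part_increment_estimate
    (N : ℕ) (hN : 2 ≤ N) (C₀ : ℝ)
    (K : EuclideanSpace ℝ (Fin N) → ℝ) (hK : KernelCond N C₀ K) :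
    ∃ C : ℝ, 0 < C ∧ ∀ μ : Measure (EuclideanSpace ℝ (Fin N)), IsFiniteMeasure μ →
      ∀ x y : EuclideanSpace ℝ (Fin N), x ≠ y →
        ENNReal.ofReal
            |∫ w in (ball x (2 * ‖x - y‖))ᶜ, (K (y - w) - K (x - w)) ∂μ| ≤
          ENNReal.ofReal (C * ‖x - y‖) * (maxFn μ x + maxSing K μ x) := by
  have hN' : 0 < N := by omega
  have hC₀ := hK.const_nonneg hN'
  set V := (volume (ball (0 : EuclideanSpace ℝ (Fin N)) 1)).toReal
  have hV : volume (ball (0 : EuclideanSpace ℝ (Fin N)) 1) = ENNReal.ofReal V :=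
    (ENNReal.ofReal_toReal measure_ball_lt_top.ne).symm
  refine ⟨C₀ * 2 ^ (2 * N + 1) * V + 1, by positivity, fun μ _ x y hxy => ?_⟩
  have hr : 0 < ‖x - y‖ := norm_pos_iff.2 (sub_ne_zero.2 hxy)
  have hρ : 0 < 2 * ‖x - y‖ := by positivity
  rw [← Real.enorm_eq_ofReal_abs, hK.setIntegral_compl_ball_sub_eq hN' x y hρ le_rfl]
  calc _ ≤ _ := enorm_add_le _ _
    _ ≤ ENNReal.ofReal (C₀ * 2 ^ (2 * N + 1) * ‖x - y‖) *
          volume (ball (0 : EuclideanSpace ℝ (Fin N)) 1) * maxFn μ x +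
          ENNReal.ofReal ‖y - x‖ * maxSing K μ x :=
        add_le_add (hK.enorm_setIntegral_compl_ball_sub_sub_fderiv_le hN' x y hρ le_rfl)
          (hK.enorm_setIntegral_compl_ball_fderiv_apply_le x (y - x) hρ)
    _ ≤ ENNReal.ofReal ((C₀ * 2 ^ (2 * N + 1) * V + 1) * ‖x - y‖) * maxFn μ x +
          ENNReal.ofReal ((C₀ * 2 ^ (2 * N + 1) * V + 1) * ‖x - y‖) * maxSing K μ x := by
        rw [hV, ← ENNReal.ofReal_mul (by positivity), norm_sub_rev y x]
        gcongr ENNReal.ofReal ?_ * _ + ENNReal.ofReal ?_ * _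
        · linarith
        · nlinarith [mul_nonneg (by positivity : 0 ≤ C₀ * 2 ^ (2 * N + 1) * V) hr.le]
    _ = _ := (mul_add _ _ _).symm
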